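/- If Z₁ and Z₂ are continuous local martingales with Z₁(0) = Z₂(0), then the local time at level 0 of the continuous local martingale Z₂ − Z₁ vanishes identically on [0,T] if and only if Z₁ and Z₂ are indistinguishable. -/

import Mathlib

open MeasureTheory Filter Set

noncomputable section

/-- A process is a martingale on the time interval `[0, T]`. -/
def MartingaleOn {Ω : Type*} [m : MeasurableSpace Ω] (T : ℝ) (ℱ : Filtration ℝ m)
    (M : ℝ → Ω → ℝ) (P : Measure Ω) : Prop :=
  Adapted ℱ M ∧ (∀ t, 0 ≤ t → t ≤ T → Integrable (M t) P) ∧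
    ∀ s t, 0 ≤ s → s ≤ t → t ≤ T → P[M t | ℱ s] =ᵐ[P] M s

/-- A process is a local martingale on `[0, T]`: there is a localizing sequence of stopping
times, nondecreasing and a.s. eventually equal to `T`, making the stopped processes
martingales on `[0, T]`. -/
def IsLocalMartingaleOn {Ω : Type*} [m : MeasurableSpace Ω] (T : ℝ) (ℱ : Filtration ℝ m)
    (M : ℝ → Ω → ℝ) (P : Measure Ω) : Prop :=
  ∃ τ : ℕ → Ω → ℝ, (∀ n, IsStoppingTime ℱ (fun ω => (τ n ω : WithTop ℝ))) ∧ (∀ n ω, τ n ω ≤ τ (n + 1) ω) ∧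
    (∀ᵐ ω ∂P, ∃ N, ∀ n ≥ N, τ n ω = T) ∧
    ∀ n, MartingaleOn T ℱ (MeasureTheory.stoppedProcess M (fun ω => (τ n ω : WithTop ℝ))) P

/-- Two processes are indistinguishable on `[0, T]`. -/
def IndistinguishableOn {Ω : Type*} [MeasurableSpace Ω] (T : ℝ) (M N : ℝ → Ω → ℝ)
    (P : Measure Ω) : Prop :=
  ∀ᵐ ω ∂P, ∀ t ∈ Set.Icc (0 : ℝ) T, M t ω = N t ω

/-- Right-continuity of a.e. path on `[0, T]`. -/
def RightContinuousPathsOn {Ω : Type*} [MeasurableSpace Ω] (T : ℝ) (M : ℝ → Ω → ℝ)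
    (P : Measure Ω) : Prop :=
  ∀ᵐ ω ∂P, ∀ t ∈ Set.Ico (0 : ℝ) T, ContinuousWithinAt (fun s => M s ω) (Set.Ici t) t

/-- Continuity of a.e. path on `[0, T]`. -/
def ContinuousPathsOn {Ω : Type*} [MeasurableSpace Ω] (T : ℝ) (M : ℝ → Ω → ℝ)
    (P : Measure Ω) : Prop :=
  ∀ᵐ ω ∂P, ContinuousOn (fun t => M t ω) (Set.Icc (0 : ℝ) T)

/-!
If `L ≡ 0`, Tanaka's formula makes `A = (Z₂ - Z₁)⁺` a nonnegative continuous local martingale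
started at `0`, hence `A ≡ 0` and `Z₂ ≤ Z₁`. Conversely, if `Z₁ = Z₂` then `A = -L/2 ≤ 0`, hence
`A ≡ 0` and `L ≡ 0`. Both directions are instances of one comparison principle: two continuous
local martingales with the same initial value, one dominating the other on `[0, T]`, are
indistinguishable. Stopping both at the minimum `ρ` of their localizing times, optional sampling
gives `E[(X - Y)(ρ ∧ t); B] = 0`, where `B ∈ ℱ 0` is the event that both localizing times are
nonnegative; the integrand is nonnegative, so `X t = Y t` a.s. for each `t`, and continuity of
paths upgrades this to indistinguishability.

Optional sampling at a general stopping time `ν` is reduced to the case of countably many values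
through the dyadic approximations `⌈2ʲ ν⌉ / 2ʲ` from above: the values of `Y` there are
conditional expectations of `Y t`, hence uniformly integrable, and converge to `Y ν` by
continuity.
-/

open Topology TopologicalSpace

def dyadicCeil (j : ℕ) (x : ℝ) : ℝ := ⌈x * 2 ^ j⌉ / 2 ^ j

lemma le_dyadicCeil (j : ℕ) (x : ℝ) : x ≤ dyadicCeil j x := by
  rw [dyadicCeil, le_div_iff₀ (by positivity)]
  exact Int.le_ceil _

lemma dyadicCeil_le_iff {j : ℕ} {x s : ℝ} : dyadicCeil j x ≤ s ↔ x ≤ ⌊s * 2 ^ j⌋ / 2 ^ j := by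
  rw [dyadicCeil, div_le_iff₀ (by positivity), le_div_iff₀ (by positivity), ← Int.ceil_le,
    ← Int.le_floor]

lemma dyadicCeil_le_add (j : ℕ) (x : ℝ) : dyadicCeil j x ≤ x + (2 ^ j)⁻¹ := by
  rw [dyadicCeil, div_le_iff₀ (by positivity), add_mul, inv_mul_cancel₀ (by positivity)]
  exact (Int.ceil_lt_add_one _).le

lemma tendsto_dyadicCeil (x : ℝ) : Tendsto (fun j => dyadicCeil j x) atTop (𝓝 x) := by
  have h : Tendsto (fun j : ℕ => x + (2 ^ j)⁻¹) atTop (𝓝 x) := by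
    simpa using tendsto_const_nhds.add
      (tendsto_inv_atTop_zero.comp (tendsto_pow_atTop_atTop_of_one_lt (one_lt_two : (1 : ℝ) < 2)))
  exact tendsto_of_tendsto_of_tendsto_of_le_of_le tendsto_const_nhds h (le_dyadicCeil · x)
    (dyadicCeil_le_add · x)

lemma countable_range_dyadicCeil (j : ℕ) : (range (dyadicCeil j)).Countable :=
  (countable_range fun k : ℤ => (k : ℝ) / 2 ^ j).mono
    (range_subset_iff.2 fun x => mem_range.2 ⟨⌈x * 2 ^ j⌉, rfl⟩)

section StoppingTime

variable {Ω : Type*} {m : MeasurableSpace Ω} {ℱ : Filtration ℝ m}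

lemma stoppedProcess_coe_apply {β : Type*} (M : ℝ → Ω → β) (τ : Ω → ℝ) (t : ℝ) (ω : Ω) :
    stoppedProcess M (fun ω => (τ ω : WithTop ℝ)) t ω = M (min t (τ ω)) ω := by
  change M (min (t : WithTop ℝ) (τ ω)).untopA ω = _
  rw [← WithTop.coe_min]
  rfl

lemma MeasureTheory.IsStoppingTime.dyadicCeil {ν : Ω → ℝ}
    (hν : IsStoppingTime ℱ fun ω => (ν ω : WithTop ℝ)) (j : ℕ) :
    IsStoppingTime ℱ fun ω => (dyadicCeil j (ν ω) : WithTop ℝ) := by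
  intro s
  simp only [WithTop.coe_le_coe, dyadicCeil_le_iff]
  have hs : (⌊s * 2 ^ j⌋ : ℝ) / 2 ^ j ≤ s := by
    rw [div_le_iff₀ (by positivity)]
    exact Int.floor_le _
  simpa only [WithTop.coe_le_coe] using ℱ.mono hs _ (hν _)

lemma MeasureTheory.IsStoppingTime.measurableSet_nonneg {τ : Ω → ℝ}
    (hτ : IsStoppingTime ℱ fun ω => (τ ω : WithTop ℝ)) : MeasurableSet[ℱ 0] {ω | 0 ≤ τ ω} := by
  convert (hτ.measurableSet_lt 0).compl using 1
  ext ω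
  simp [not_lt]

end StoppingTime

lemma MeasureTheory.UniformIntegrable.tendsto_setIntegral_of_ae_tendsto {α : Type*}
    {mα : MeasurableSpace α} {μ : Measure α} [IsFiniteMeasure μ] {f : ℕ → α → ℝ} {g : α → ℝ}
    (hf : UniformIntegrable f 1 μ) (hfg : ∀ᵐ x ∂μ, Tendsto (f · x) atTop (𝓝 (g x)))
    (s : Set α) : Tendsto (fun n => ∫ x in s, f n x ∂μ) atTop (𝓝 (∫ x in s, g x ∂μ)) := by
  have hg : MemLp g 1 μ := hf.memLp_of_ae_tendsto hfg
  refine tendsto_setIntegral_of_L1' g hg.aestronglyMeasurable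
    (Eventually.of_forall fun n => memLp_one_iff_integrable.1 (hf.memLp n)) ?_ s
  exact tendsto_Lp_finite_of_tendsto_ae le_rfl ENNReal.one_ne_top hf.1 hg hf.2.1 hfg

lemma ae_eqOn_of_forall_ae_eq {Ω ι E : Type*} {m : MeasurableSpace Ω} {P : Measure Ω}
    [TopologicalSpace ι] [PseudoMetrizableSpace ι] [TopologicalSpace E] [T2Space E] {s : Set ι}
    (hs : IsSeparable s) {X Y : ι → Ω → E} (hX : ∀ᵐ ω ∂P, ContinuousOn (X · ω) s)
    (hY : ∀ᵐ ω ∂P, ContinuousOn (Y · ω) s) (hXY : ∀ t ∈ s, X t =ᵐ[P] Y t) :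
    ∀ᵐ ω ∂P, EqOn (X · ω) (Y · ω) s := by
  obtain ⟨c, hcs, hc, hsc⟩ := hs.exists_countable_dense_subset
  have hc_ae : ∀ᵐ ω ∂P, EqOn (X · ω) (Y · ω) c :=
    (ae_ball_iff hc).2 fun t ht => hXY t (hcs ht)
  filter_upwards [hX, hY, hc_ae] with ω hXω hYω hcω
  exact hcω.of_subset_closure hXω hYω hcs hsc

/-- `ℱ` frozen at `ℱ 0` before time `0`, so that a martingale on `[0, T]` extends to a martingale
indexed by all of `ℝ`, as the optional sampling theorem for `Martingale` requires. -/
def MeasureTheory.Filtration.maxZero {Ω : Type*} {m : MeasurableSpace Ω} (ℱ : Filtration ℝ m) :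
    Filtration ℝ m where
  seq s := ℱ (max s 0)
  mono' _ _ h := ℱ.mono (max_le_max_right 0 h)
  le' _ := ℱ.le _

section MartingaleOn

variable {Ω : Type*} {m : MeasurableSpace Ω} {P : Measure Ω} {ℱ : Filtration ℝ m} {T : ℝ}
  {Y : ℝ → Ω → ℝ} {ν : Ω → ℝ} {t : ℝ}

lemma ContinuousPathsOn.tendsto_comp_dyadicCeil (hc : ContinuousPathsOn T Y P)
    (hν0 : ∀ ω, 0 ≤ ν ω) (ht : t ∈ Icc 0 T) :
    ∀ᵐ ω ∂P, Tendsto (fun j => Y (min (dyadicCeil j (ν ω)) t) ω) atTop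
      (𝓝 (Y (min (ν ω) t) ω)) := by
  filter_upwards [hc] with ω hω
  have hmem : ∀ {x}, 0 ≤ x → min x t ∈ Icc 0 T :=
    fun hx => ⟨le_min hx ht.1, (min_le_right _ _).trans ht.2⟩
  refine (hω _ (hmem (hν0 ω))).tendsto.comp (tendsto_nhdsWithin_iff.2 ⟨?_, ?_⟩)
  · exact (tendsto_dyadicCeil (ν ω)).min tendsto_const_nhds
  · exact Eventually.of_forall fun j => hmem ((hν0 ω).trans (le_dyadicCeil j (ν ω)))

variable [IsFiniteMeasure P]

lemma MartingaleOn.martingale_maxZero (hY : MartingaleOn T ℱ Y P) (hT : 0 ≤ T) :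
    Martingale (fun s => Y (min (max s 0) T)) ℱ.maxZero P := by
  obtain ⟨hadp, hint, hmart⟩ := hY
  refine ⟨fun s => ((hadp _).mono (ℱ.mono (min_le_left _ _)) le_rfl).stronglyMeasurable,
    fun i j hij => ?_⟩
  change P[Y (min (max j 0) T) | ℱ (max i 0)] =ᵐ[P] Y (min (max i 0) T)
  have hj : min (max i 0) T ≤ min (max j 0) T := min_le_min_right T (max_le_max_right 0 hij)
  rcases le_total (max i 0) T with hiT | hTi
  · rw [min_eq_left hiT] at hj ⊢
    exact hmart _ _ (le_max_right i 0) hj (min_le_right _ _)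
  · rw [min_eq_right hTi] at hj ⊢
    rw [le_antisymm (min_le_right _ _) hj]
    exact (condExp_of_stronglyMeasurable (ℱ.le _)
      ((hadp T).mono (ℱ.mono hTi) le_rfl).stronglyMeasurable (hint T hT le_rfl)).eventuallyEq

lemma MartingaleOn.setIntegral_eq_setIntegral_zero (hY : MartingaleOn T ℱ Y P)
    {t : ℝ} (ht : t ∈ Icc 0 T) {B : Set Ω} (hB : MeasurableSet[ℱ 0] B) :
    ∫ ω in B, Y t ω ∂P = ∫ ω in B, Y 0 ω ∂P := by
  rw [← setIntegral_condExp (ℱ.le 0) (hY.2.1 t ht.1 ht.2) hB]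
  exact setIntegral_congr_ae (ℱ.le 0 _ hB) ((hY.2.2 0 t le_rfl ht.1 ht.2).mono fun _ h _ => h)

lemma MartingaleOn.exists_comp_dyadicCeil_ae_eq_condExp
    (hY : MartingaleOn T ℱ Y P) (hν : IsStoppingTime ℱ fun ω => (ν ω : WithTop ℝ))
    (hν0 : ∀ ω, 0 ≤ ν ω) (ht : t ∈ Icc 0 T) (j : ℕ) :
    ∃ 𝒢 ≤ m, ℱ 0 ≤ 𝒢 ∧
      (fun ω => Y (min (dyadicCeil j (ν ω)) t) ω) =ᵐ[P] P[Y t | 𝒢] := by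
  set νj : Ω → WithTop ℝ := fun ω => ((min (dyadicCeil j (ν ω)) t : ℝ) : WithTop ℝ)
  have hνj : IsStoppingTime ℱ.maxZero νj := by
    have h := (hν.dyadicCeil j).min_const t
    intro s
    change MeasurableSet[ℱ (max s 0)] _
    simpa only [νj, WithTop.coe_min] using ℱ.mono (le_max_left s 0) _ (h s)
  have hνj_le : ∀ ω, νj ω ≤ t := fun ω => WithTop.coe_le_coe.2 (min_le_right _ _)
  have hνj_range : (range νj).Countable := by
    refine ((countable_range_dyadicCeil j).image fun x => ((min x t : ℝ) : WithTop ℝ)).mono ?_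
    rintro _ ⟨ω, rfl⟩
    exact ⟨_, mem_range_self (ν ω), rfl⟩
  have hνj_nonneg : ∀ ω, 0 ≤ min (dyadicCeil j (ν ω)) t :=
    fun ω => le_min ((hν0 ω).trans (le_dyadicCeil j (ν ω))) ht.1
  refine ⟨hνj.measurableSpace, hνj.measurableSpace_le_of_le hνj_le, ?_, ?_⟩
  · calc ℱ 0 ≤ ℱ.maxZero 0 := ℱ.mono (le_max_left 0 0)
      _ = (isStoppingTime_const ℱ.maxZero 0).measurableSpace :=
          (IsStoppingTime.measurableSpace_const _ 0).symm
      _ ≤ hνj.measurableSpace := (isStoppingTime_const _ 0).measurableSpace_mono hνj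
          fun ω => WithTop.coe_le_coe.2 (hνj_nonneg ω)
  · have h := (hY.martingale_maxZero (ht.1.trans ht.2))
      |>.stoppedValue_ae_eq_condExp_of_le_const_of_countable_range hνj hνj_le hνj_range
    simp only [max_eq_left ht.1, min_eq_left ht.2] at h
    refine (EventuallyEq.of_eq ?_).trans h
    funext ω
    change _ = Y (min (max (min (dyadicCeil j (ν ω)) t) 0) T) ω
    rw [max_eq_left (hνj_nonneg ω), min_eq_left ((min_le_right _ t).trans ht.2)]

lemma MartingaleOn.uniformIntegrable_comp_dyadicCeil (hY : MartingaleOn T ℱ Y P)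
    (hν : IsStoppingTime ℱ fun ω => (ν ω : WithTop ℝ)) (hν0 : ∀ ω, 0 ≤ ν ω) (ht : t ∈ Icc 0 T) :
    UniformIntegrable (fun j ω => Y (min (dyadicCeil j (ν ω)) t) ω) 1 P := by
  choose 𝒢 h𝒢m _ h𝒢 using hY.exists_comp_dyadicCeil_ae_eq_condExp hν hν0 ht
  exact ((hY.2.1 t ht.1 ht.2).uniformIntegrable_condExp h𝒢m).ae_eq fun j => (h𝒢 j).symm

lemma MartingaleOn.integrable_comp_stoppingTime (hY : MartingaleOn T ℱ Y P)
    (hc : ContinuousPathsOn T Y P) (hν : IsStoppingTime ℱ fun ω => (ν ω : WithTop ℝ))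
    (hν0 : ∀ ω, 0 ≤ ν ω) (ht : t ∈ Icc 0 T) : Integrable (fun ω => Y (min (ν ω) t) ω) P :=
  (hY.uniformIntegrable_comp_dyadicCeil hν hν0 ht).integrable_of_ae_tendsto
    (hc.tendsto_comp_dyadicCeil hν0 ht)

lemma MartingaleOn.setIntegral_comp_stoppingTime (hY : MartingaleOn T ℱ Y P)
    (hc : ContinuousPathsOn T Y P) (hν : IsStoppingTime ℱ fun ω => (ν ω : WithTop ℝ))
    (hν0 : ∀ ω, 0 ≤ ν ω) (ht : t ∈ Icc 0 T) {B : Set Ω} (hB : MeasurableSet[ℱ 0] B) :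
    ∫ ω in B, Y (min (ν ω) t) ω ∂P = ∫ ω in B, Y 0 ω ∂P := by
  have happrox : ∀ j, ∫ ω in B, Y (min (dyadicCeil j (ν ω)) t) ω ∂P = ∫ ω in B, Y t ω ∂P := by
    intro j
    obtain ⟨𝒢, h𝒢m, h0𝒢, h𝒢⟩ := hY.exists_comp_dyadicCeil_ae_eq_condExp hν hν0 ht j
    rw [setIntegral_congr_ae (ℱ.le 0 _ hB) (h𝒢.mono fun _ h _ => h),
      setIntegral_condExp h𝒢m (hY.2.1 t ht.1 ht.2) (h0𝒢 _ hB)]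
  rw [← hY.setIntegral_eq_setIntegral_zero ht hB]
  refine tendsto_nhds_unique ((hY.uniformIntegrable_comp_dyadicCeil hν hν0 ht)
    |>.tendsto_setIntegral_of_ae_tendsto (hc.tendsto_comp_dyadicCeil hν0 ht) B) ?_
  simp_rw [happrox]
  exact tendsto_const_nhds

end MartingaleOn

section LocalMartingale

variable {Ω : Type*} {m : MeasurableSpace Ω} {P : Measure Ω} {ℱ : Filtration ℝ m} {T : ℝ}
  {X Y : ℝ → Ω → ℝ}

lemma ContinuousPathsOn.stoppedProcess (hc : ContinuousPathsOn T X P) (τ : Ω → ℝ) :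
    ContinuousPathsOn T (stoppedProcess X fun ω => (τ ω : WithTop ℝ)) P := by
  filter_upwards [hc] with ω hω
  simp only [stoppedProcess_coe_apply]
  rcases le_total 0 (τ ω) with hτ | hτ
  · refine hω.comp (continuous_id.min continuous_const).continuousOn fun s hs => ?_
    exact ⟨le_min hs.1 hτ, (min_le_left _ _).trans hs.2⟩
  · exact continuousOn_const.congr fun s hs => by rw [min_eq_right (hτ.trans hs.1)]

lemma continuousPathsOn_zero : ContinuousPathsOn T (0 : ℝ → Ω → ℝ) P :=
  ae_of_all _ fun _ => continuousOn_const

lemma isLocalMartingaleOn_zero : IsLocalMartingaleOn T ℱ 0 P := by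
  refine ⟨fun _ _ => T, fun _ => isStoppingTime_const ℱ T, fun _ _ => le_rfl,
    ae_of_all _ fun _ => ⟨0, fun _ _ => rfl⟩, fun _ => ?_⟩
  refine ⟨fun _ => measurable_const, fun _ _ _ => integrable_zero _ _ _, fun s _ _ _ _ => ?_⟩
  change P[(0 : Ω → ℝ) | ℱ s] =ᵐ[P] 0
  rw [condExp_zero]

variable [IsFiniteMeasure P]

lemma ae_eq_at_min_of_le_of_martingaleOn_stoppedProcess {τ σ : Ω → ℝ}
    (hτ : IsStoppingTime ℱ fun ω => (τ ω : WithTop ℝ))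
    (hσ : IsStoppingTime ℱ fun ω => (σ ω : WithTop ℝ))
    (hX : MartingaleOn T ℱ (stoppedProcess X fun ω => (τ ω : WithTop ℝ)) P)
    (hY : MartingaleOn T ℱ (stoppedProcess Y fun ω => (σ ω : WithTop ℝ)) P)
    (hcX : ContinuousPathsOn T X P) (hcY : ContinuousPathsOn T Y P)
    (h0 : ∀ᵐ ω ∂P, X 0 ω = Y 0 ω) (hle : ∀ᵐ ω ∂P, ∀ s ∈ Icc 0 T, Y s ω ≤ X s ω)
    {t : ℝ} (ht : t ∈ Icc 0 T) :
    ∀ᵐ ω ∂P, 0 ≤ τ ω → 0 ≤ σ ω →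
      X (min (min (τ ω) (σ ω)) t) ω = Y (min (min (τ ω) (σ ω)) t) ω := by
  set ρ : Ω → ℝ := fun ω => max (min (τ ω) (σ ω)) 0
  have hρ : IsStoppingTime ℱ fun ω => (ρ ω : WithTop ℝ) := by
    simpa only [ρ, WithTop.coe_max, WithTop.coe_min] using (hτ.min hσ).max_const 0
  -- Off `B` the stopped processes are frozen at a negative time and cannot be compared.
  set B := {ω | 0 ≤ τ ω} ∩ {ω | 0 ≤ σ ω}
  have hB : MeasurableSet[ℱ 0] B := hτ.measurableSet_nonneg.inter hσ.measurableSet_nonneg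
  have hBm : MeasurableSet B := ℱ.le 0 _ hB
  set Xρ := fun ω => stoppedProcess X (fun ω => (τ ω : WithTop ℝ)) (min (ρ ω) t) ω
  set Yρ := fun ω => stoppedProcess Y (fun ω => (σ ω : WithTop ℝ)) (min (ρ ω) t) ω
  have hXρ : ∀ ω ∈ B, Xρ ω = X (min (min (τ ω) (σ ω)) t) ω := fun ω hω => by
    simp only [Xρ, ρ, stoppedProcess_coe_apply]
    rw [max_eq_left (le_min hω.1 hω.2),
      min_eq_left ((min_le_left _ _).trans (min_le_left _ _))]
  have hYρ : ∀ ω ∈ B, Yρ ω = Y (min (min (τ ω) (σ ω)) t) ω := fun ω hω => by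
    simp only [Yρ, ρ, stoppedProcess_coe_apply]
    rw [max_eq_left (le_min hω.1 hω.2),
      min_eq_left ((min_le_left _ _).trans (min_le_right _ _))]
  have hρ0 : ∀ ω, 0 ≤ ρ ω := fun ω => le_max_right _ _
  have hXρ_int := hX.integrable_comp_stoppingTime (hcX.stoppedProcess τ) hρ hρ0 ht
  have hYρ_int := hY.integrable_comp_stoppingTime (hcY.stoppedProcess σ) hρ hρ0 ht
  have hint : ∫ ω in B, (Xρ ω - Yρ ω) ∂P = 0 := by
    rw [integral_sub hXρ_int.integrableOn hYρ_int.integrableOn,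
      hX.setIntegral_comp_stoppingTime (hcX.stoppedProcess τ) hρ hρ0 ht hB,
      hY.setIntegral_comp_stoppingTime (hcY.stoppedProcess σ) hρ hρ0 ht hB, sub_eq_zero]
    refine setIntegral_congr_ae hBm (h0.mono fun ω h0ω hω => ?_)
    rw [stoppedProcess_coe_apply, stoppedProcess_coe_apply, min_eq_left hω.1, min_eq_left hω.2,
      h0ω]
  have hnonneg : 0 ≤ᵐ[P.restrict B] fun ω => Xρ ω - Yρ ω := by
    refine (ae_restrict_iff' hBm).2 (hle.mono fun ω hleω hω => ?_)
    change 0 ≤ Xρ ω - Yρ ω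
    rw [hXρ ω hω, hYρ ω hω, sub_nonneg]
    exact hleω _ ⟨le_min (le_min hω.1 hω.2) ht.1, (min_le_right _ _).trans ht.2⟩
  have hzero := (setIntegral_eq_zero_iff_of_nonneg_ae hnonneg
    (hXρ_int.sub hYρ_int).integrableOn).1 hint
  filter_upwards [(ae_restrict_iff' hBm).1 hzero] with ω hω hτω hσω
  have hωB : ω ∈ B := ⟨hτω, hσω⟩
  rw [← hXρ ω hωB, ← hYρ ω hωB, ← sub_eq_zero]
  exact hω hωB

lemma IsLocalMartingaleOn.ae_eq_of_le (hX : IsLocalMartingaleOn T ℱ X P)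
    (hY : IsLocalMartingaleOn T ℱ Y P) (hcX : ContinuousPathsOn T X P)
    (hcY : ContinuousPathsOn T Y P) (h0 : ∀ᵐ ω ∂P, X 0 ω = Y 0 ω)
    (hle : ∀ᵐ ω ∂P, ∀ s ∈ Icc 0 T, Y s ω ≤ X s ω) {t : ℝ} (ht : t ∈ Icc 0 T) :
    X t =ᵐ[P] Y t := by
  obtain ⟨τ, hτ, -, hτT, hXτ⟩ := hX
  obtain ⟨σ, hσ, -, hσT, hYσ⟩ := hY
  have key := fun n => ae_eq_at_min_of_le_of_martingaleOn_stoppedProcess (hτ n) (hσ n)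
    (hXτ n) (hYσ n) hcX hcY h0 hle ht
  filter_upwards [ae_all_iff.2 key, hτT, hσT] with ω hω ⟨N₁, hN₁⟩ ⟨N₂, hN₂⟩
  have hτN := hN₁ (max N₁ N₂) (le_max_left _ _)
  have hσN := hN₂ (max N₁ N₂) (le_max_right _ _)
  have hT : 0 ≤ T := ht.1.trans ht.2
  simpa [hτN, hσN, min_eq_right ht.2] using hω (max N₁ N₂) (hτN ▸ hT) (hσN ▸ hT)

lemma IsLocalMartingaleOn.indistinguishableOn_of_le (hX : IsLocalMartingaleOn T ℱ X P)
    (hY : IsLocalMartingaleOn T ℱ Y P) (hcX : ContinuousPathsOn T X P)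
    (hcY : ContinuousPathsOn T Y P) (h0 : ∀ᵐ ω ∂P, X 0 ω = Y 0 ω)
    (hle : ∀ᵐ ω ∂P, ∀ s ∈ Icc 0 T, Y s ω ≤ X s ω) : IndistinguishableOn T X Y P :=
  ae_eqOn_of_forall_ae_eq (.of_separableSpace _) hcX hcY fun _ ht =>
    hX.ae_eq_of_le hY hcX hcY h0 hle ht

end LocalMartingale

theorem localTime_zero_iff_indistinguishable_general
    {Ω : Type*} [m : MeasurableSpace Ω] (P : Measure Ω) [IsProbabilityMeasure P]
    (ℱ : Filtration ℝ m) (T : ℝ)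
    (Z₁ Z₂ A L : ℝ → Ω → ℝ)
    (hZ₁ : IsLocalMartingaleOn T ℱ Z₁ P) (hZ₂ : IsLocalMartingaleOn T ℱ Z₂ P)
    (hcZ₁ : ContinuousPathsOn T Z₁ P) (hcZ₂ : ContinuousPathsOn T Z₂ P)
    (h0 : ∀ᵐ ω ∂P, Z₁ 0 ω = Z₂ 0 ω)
    -- `A` is the stochastic integral `∫₀· 1_{Z₂ > Z₁} d(Z₂ - Z₁)`, a continuous local
    -- martingale vanishing at time `0`:
    (hA : IsLocalMartingaleOn T ℱ A P) (hcA : ContinuousPathsOn T A P)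
    (hA0 : ∀ᵐ ω ∂P, A 0 ω = 0)
    -- `L` is the local time of `Z₂ - Z₁` at level `0`: continuous, nondecreasing, from `0`:
    (hL0 : ∀ᵐ ω ∂P, L 0 ω = 0)
    (hLmono : ∀ᵐ ω ∂P, MonotoneOn (fun t => L t ω) (Set.Icc (0 : ℝ) T))
    -- Tanaka–Meyer formula:
    (hTanaka : ∀ᵐ ω ∂P, ∀ t ∈ Set.Icc (0 : ℝ) T,
      max (Z₂ t ω - Z₁ t ω) 0 = max (Z₂ 0 ω - Z₁ 0 ω) 0 + A t ω + L t ω / 2) :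
    (∀ᵐ ω ∂P, ∀ t ∈ Set.Icc (0 : ℝ) T, L t ω = 0) ↔
      IndistinguishableOn T Z₁ Z₂ P := by
  have hTanaka' : ∀ᵐ ω ∂P, ∀ t ∈ Icc 0 T, max (Z₂ t ω - Z₁ t ω) 0 = A t ω + L t ω / 2 := by
    filter_upwards [hTanaka, h0] with ω hω h0ω t ht
    rw [hω t ht, h0ω, sub_self, max_self, zero_add]
  constructor
  · intro hL
    have hA_nonneg : ∀ᵐ ω ∂P, ∀ t ∈ Icc 0 T, 0 ≤ A t ω := by
      filter_upwards [hTanaka', hL] with ω hω hLω t ht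
      linarith [hω t ht, hLω t ht, le_max_right (Z₂ t ω - Z₁ t ω) 0]
    have hA_zero := hA.indistinguishableOn_of_le isLocalMartingaleOn_zero hcA continuousPathsOn_zero
      hA0 hA_nonneg
    refine hZ₁.indistinguishableOn_of_le hZ₂ hcZ₁ hcZ₂ h0 ?_
    filter_upwards [hTanaka', hL, hA_zero] with ω hω hLω hAω t ht
    have hAt : A t ω = 0 := hAω t ht
    linarith [hω t ht, hLω t ht, le_max_left (Z₂ t ω - Z₁ t ω) 0]
  · intro hZ
    have hA_nonpos : ∀ᵐ ω ∂P, ∀ t ∈ Icc 0 T, A t ω ≤ 0 := by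
      filter_upwards [hTanaka', hZ, hL0, hLmono] with ω hω hZω hL0ω hLω t ht
      have hL : L 0 ω ≤ L t ω := hLω ⟨le_rfl, ht.1.trans ht.2⟩ ht ht.1
      have h := hω t ht
      rw [hZω t ht, sub_self, max_self] at h
      linarith
    have hA_zero := isLocalMartingaleOn_zero.indistinguishableOn_of_le hA continuousPathsOn_zero hcA
      (hA0.mono fun _ h => h.symm) hA_nonpos
    filter_upwards [hTanaka', hZ, hA_zero] with ω hω hZω hAω t ht
    have h := hω t ht
    rw [hZω t ht, sub_self, max_self] at h
    have hAt : 0 = A t ω := hAω t ht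
    linarith

/-- For continuous local martingales `Z₁, Z₂` with the same initial value, the local time at
level `0` of `Z₂ - Z₁` (characterized through the Tanaka–Meyer formula
`(Z₂(t) - Z₁(t))⁺ = (Z₂(0) - Z₁(0))⁺ + ∫₀ᵗ 1_{Z₂ > Z₁} d(Z₂ - Z₁) + ½ L⁰(t)`,
where the stochastic integral `A` is a local martingale vanishing at `0` and `L⁰` is
nondecreasing, starts at `0` and is continuous) vanishes identically on `[0, T]` if and only
if `Z₁` and `Z₂` are indistinguishable. -/
theorem localTime_zero_iff_indistinguishable
    {Ω : Type*} [m : MeasurableSpace Ω] (P : Measure Ω) [IsProbabilityMeasure P]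
    (ℱ : Filtration ℝ m) (T : ℝ) (hT : 0 < T)
    (Z₁ Z₂ A L : ℝ → Ω → ℝ)
    (hZ₁ : IsLocalMartingaleOn T ℱ Z₁ P) (hZ₂ : IsLocalMartingaleOn T ℱ Z₂ P)
    (hcZ₁ : ContinuousPathsOn T Z₁ P) (hcZ₂ : ContinuousPathsOn T Z₂ P)
    (h0 : ∀ᵐ ω ∂P, Z₁ 0 ω = Z₂ 0 ω)
    -- `A` is the stochastic integral `∫₀· 1_{Z₂ > Z₁} d(Z₂ - Z₁)`, a continuous local
    -- martingale vanishing at time `0`: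
    (hA : IsLocalMartingaleOn T ℱ A P) (hcA : ContinuousPathsOn T A P)
    (hA0 : ∀ᵐ ω ∂P, A 0 ω = 0)
    -- `L` is the local time of `Z₂ - Z₁` at level `0`: continuous, nondecreasing, from `0`:
    (hcL : ContinuousPathsOn T L P) (hL0 : ∀ᵐ ω ∂P, L 0 ω = 0)
    (hLmono : ∀ᵐ ω ∂P, MonotoneOn (fun t => L t ω) (Set.Icc (0 : ℝ) T))
    -- Tanaka–Meyer formula:
    (hTanaka : ∀ᵐ ω ∂P, ∀ t ∈ Set.Icc (0 : ℝ) T,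
      max (Z₂ t ω - Z₁ t ω) 0 = max (Z₂ 0 ω - Z₁ 0 ω) 0 + A t ω + L t ω / 2) :
    (∀ᵐ ω ∂P, ∀ t ∈ Set.Icc (0 : ℝ) T, L t ω = 0) ↔
      IndistinguishableOn T Z₁ Z₂ P :=
  localTime_zero_iff_indistinguishable_general (m := m) P ℱ T Z₁ Z₂ A L hZ₁ hZ₂ hcZ₁ hcZ₂ h0 hA hcA
    hA0 hL0 hLmono hTanaka
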